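/- For all r ∈ (0,∞) and ε ∈ (0,1/2], the product function pr : ℝ² → ℝ, pr(x,y) = xy, satisfies Cost_{ReLU,1}(pr, [−r,r]², √8·r, ε) ≤ max{208, 320·log₂(r) + 160·log₂(ε^{−1}) + 48}, where the weight function is the constant function 1. Equivalently, there exists a skeleton φ whose ReLU-realization R_ReLU(φ) : ℝ² → ℝ is √8·r-Lipschitz on ℝ², satisfies sup_{(x,y)∈[−r,r]²} |xy − R_ReLU(φ)(x,y)| ≤ ε, and has P(φ) ≤ max{208, 320·log₂(r) + 160·log₂(ε^{−1}) + 48}. -/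

import Mathlib

open scoped BigOperators ENNReal

noncomputable section

/-- The rectified linear unit activation function. -/
def ReLU (x : ℝ) : ℝ := max x 0

/-- Truncation of a real sequence to its first `n` entries. -/
def trunc (n : ℕ) (x : ℕ → ℝ) : ℕ → ℝ := fun j => if j < n then x j else 0

/-- Embedding of a Euclidean vector into the space of real sequences. -/
def emb (n : ℕ) (x : EuclideanSpace ℝ (Fin n)) : ℕ → ℝ :=
  fun j => if h : j < n then x ⟨j, h⟩ else 0

/-- A neural network skeleton of depth `Dm + 1`.  The layer dimensions are
`l 0, …, l (Dm + 1)`; the weight matrix of layer `k + 1` is `V k` (a matrix of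
size `l (k+1) × l k`, stored as a doubly indexed sequence) and its bias is `b k`.
Entries beyond the relevant ranges are irrelevant junk. -/
structure NN where
  Dm : ℕ
  l : ℕ → ℕ
  V : ℕ → ℕ → ℕ → ℝ
  b : ℕ → ℕ → ℝ

namespace NN

/-- Depth `D(φ)` of a skeleton. -/
def depth (φ : NN) : ℕ := φ.Dm + 1

/-- Number of parameters `P(φ) = ∑_{k=1}^{D} l_k (l_{k-1} + 1)`. -/
def P (φ : NN) : ℕ := ∑ k ∈ Finset.range φ.depth, φ.l (k + 1) * (φ.l k + 1)

/-- The affine map `A_{k+1}(x) = V_{k+1} x + b_{k+1}` of a skeleton. -/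
def aff (φ : NN) (k : ℕ) (x : ℕ → ℝ) : ℕ → ℝ :=
  fun i => (∑ j ∈ Finset.range (φ.l k), φ.V k i j * x j) + φ.b k i

/-- State after `k` layers, with the activation applied after each affine map. -/
def hidden (a : ℝ → ℝ) (φ : NN) : ℕ → (ℕ → ℝ) → ℕ → ℝ
  | 0 => fun x => x
  | k + 1 => fun x i => a (φ.aff k (φ.hidden a k x) i)

/-- The `a`-realization `R_a(φ) = A_D ∘ a ∘ A_{D-1} ∘ ⋯ ∘ a ∘ A_1`, acting on
sequences (only the first `l 0` input coordinates and the first `l D` output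
coordinates are meaningful). -/
def fullReal (a : ℝ → ℝ) (φ : NN) (x : ℕ → ℝ) : ℕ → ℝ :=
  φ.aff φ.Dm (φ.hidden a φ.Dm (trunc (φ.l 0) x))

/-- The `a`-realization as a map `ℝ^m → ℝ^n` (meaningful when `l 0 = m` and
`l D = n`). -/
def realAs (a : ℝ → ℝ) (φ : NN) (m n : ℕ) (x : EuclideanSpace ℝ (Fin m)) :
    EuclideanSpace ℝ (Fin n) :=
  WithLp.toLp 2 fun (i : Fin n) => φ.fullReal a (emb m x) i

/-- The `a`-realization as a scalar-valued map `ℝ^m → ℝ`. -/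
def realScalar (a : ℝ → ℝ) (φ : NN) (m : ℕ) (x : EuclideanSpace ℝ (Fin m)) : ℝ :=
  φ.fullReal a (emb m x) 0

/-- The `a`-realization as a map `ℝ → ℝ`. -/
def real1 (a : ℝ → ℝ) (φ : NN) (x : ℝ) : ℝ :=
  φ.fullReal a (fun j => if j = 0 then x else 0) 0

/-- Concatenation `ψ ∘ φ` of two skeletons (meaningful when
`l_{D(φ)}(φ) = l_0(ψ)`). -/
def comp (ψ φ : NN) : NN where
  Dm := φ.Dm + ψ.Dm
  l := fun k => if k < φ.depth then φ.l k else ψ.l (k + 1 - φ.depth)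
  V := fun k =>
    if k < φ.Dm then φ.V k
    else if k = φ.Dm then fun i j => ∑ m ∈ Finset.range (ψ.l 0), ψ.V 0 i m * φ.V φ.Dm m j
    else ψ.V (k - φ.Dm)
  b := fun k =>
    if k < φ.Dm then φ.b k
    else if k = φ.Dm then
      fun i => (∑ m ∈ Finset.range (ψ.l 0), ψ.V 0 i m * φ.b φ.Dm m) + ψ.b 0 i
    else ψ.b (k - φ.Dm)

/-- Offset of the `q`-th block in layer `k` of a parallelization. -/
def poff (ν : ℕ → NN) (k q : ℕ) : ℕ := ∑ j ∈ Finset.range q, (ν j).l k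

/-- Parallelization `p(φ_1, …, φ_n)` of `n` skeletons (meaningful when they all
have the same depth): block-diagonal weight matrices and concatenated biases. -/
def parallel (n : ℕ) (ν : ℕ → NN) : NN where
  Dm := (ν 0).Dm
  l := fun k => ∑ j ∈ Finset.range n, (ν j).l k
  V := fun k i j =>
    ∑ q ∈ Finset.range n,
      if poff ν (k + 1) q ≤ i ∧ i < poff ν (k + 1) q + (ν q).l (k + 1) ∧
          poff ν k q ≤ j ∧ j < poff ν k q + (ν q).l k then
        (ν q).V k (i - poff ν (k + 1) q) (j - poff ν k q)
      else 0
  b := fun k i =>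
    ∑ q ∈ Finset.range n,
      if poff ν (k + 1) q ≤ i ∧ i < poff ν (k + 1) q + (ν q).l (k + 1) then
        (ν q).b k (i - poff ν (k + 1) q)
      else 0

/-- The activation `a` fulfills the `c`-identity requirement, witnessed by the
skeleton `I`: `I` has depth 2, input and output dimension 1, hidden dimension
at most `c`, and its `a`-realization is the identity on `ℝ`. -/
def IdReq (a : ℝ → ℝ) (c : ℝ) (I : NN) : Prop :=
  I.Dm = 1 ∧ I.l 0 = 1 ∧ I.l 2 = 1 ∧ (I.l 1 : ℝ) ≤ c ∧
    ∀ x : ℕ → ℝ, I.fullReal a x 0 = x 0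

/-- The `d`-fold parallelization `I_d` of an identity skeleton. -/
def Idn (I : NN) (d : ℕ) : NN := parallel d fun _ => I

/-- Concatenate `m` identity networks after `φ`. -/
def padAfter (I φ : NN) : ℕ → NN
  | 0 => φ
  | m + 1 => comp (Idn I ((padAfter I φ m).l (padAfter I φ m).depth)) (padAfter I φ m)

/-- Concatenate `m` identity networks in front of `φ`. -/
def padBefore (I φ : NN) : ℕ → NN
  | 0 => φ
  | m + 1 => comp (padBefore I φ m) (Idn I ((padBefore I φ m).l 0))

/-- Diagonal ("staggered") parallelization `p_I(φ_1, …, φ_n)` of arbitrary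
skeletons, obtained by padding each `φ_q` with identity networks so that all
have equal depth and then parallelizing. -/
def dpar (I : NN) (n : ℕ) (ν : ℕ → NN) : NN :=
  parallel n fun q =>
    padAfter I (padBefore I (ν q) (∑ j ∈ Finset.range q, (ν j).depth))
      (∑ j ∈ Finset.Ico (q + 1) n, (ν j).depth)

end NN

/-- A continuous function `ℝ^m → ℝ^n`, as a member of a catalog. -/
structure CatFun where
  inDim : ℕ
  outDim : ℕ
  toFun : EuclideanSpace ℝ (Fin inDim) → EuclideanSpace ℝ (Fin outDim)
  cont : Continuous toFun

/-- Approximation cost `Cost_{a,w}(g, E, L, ε)`: the infimum of the number of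
parameters over all skeletons realizing an `L`-Lipschitz map `ℝ^{in} → ℝ^{out}`
that approximates `g` on `E` to accuracy `ε` with respect to the weight `w`. -/
def Cost (a : ℝ → ℝ) (w : ℝ → ℝ) (g : CatFun)
    (E : Set (EuclideanSpace ℝ (Fin g.inDim))) (L ε : ℝ) : ℝ≥0∞ :=
  ⨅ (φ : NN) (_ : φ.l 0 = g.inDim ∧ φ.l φ.depth = g.outDim ∧
      (∀ x y : EuclideanSpace ℝ (Fin g.inDim),
        ‖φ.realAs a g.inDim g.outDim x - φ.realAs a g.inDim g.outDim y‖ ≤ L * ‖x - y‖) ∧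
      ∀ x ∈ E, w ‖x‖ * ‖g.toFun x - φ.realAs a g.inDim g.outDim x‖ ≤ ε),
    (φ.P : ℝ≥0∞)

/-- The catalog `F` is `(w, ε, κ)`-approximable with approximation sets `E`
(each containing `0`) and Lipschitz constants `L` (nonnegative). -/
def Approximable (a w : ℝ → ℝ) (F : Set CatFun)
    (E : (g : CatFun) → Set (EuclideanSpace ℝ (Fin g.inDim))) (L : CatFun → ℝ)
    (ε κ₀ κ₁ κ₂ κ₃ : ℝ) : Prop :=
  (∀ g ∈ F, (0 : EuclideanSpace ℝ (Fin g.inDim)) ∈ E g) ∧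
  (∀ g ∈ F, 0 ≤ L g) ∧
  (∀ g ∈ F, ‖g.toFun 0‖ ≤ κ₀) ∧
  ∀ g ∈ F, ∀ δ : ℝ, 0 < δ → δ ≤ ε →
    Cost a w g (E g) (L g) δ ≤
      ENNReal.ofReal (κ₁ * (max g.inDim g.outDim : ℝ) ^ κ₂ * δ ^ (-κ₃))

/-- The catalog `F` is `(w, ε, κ)`-log-approximable. -/
def LogApproximable (a w : ℝ → ℝ) (F : Set CatFun)
    (E : (g : CatFun) → Set (EuclideanSpace ℝ (Fin g.inDim))) (L : CatFun → ℝ)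
    (ε κ₀ κ₁ κ₂ κ₃ : ℝ) : Prop :=
  (∀ g ∈ F, (0 : EuclideanSpace ℝ (Fin g.inDim)) ∈ E g) ∧
  (∀ g ∈ F, 0 ≤ L g) ∧
  (∀ g ∈ F, ‖g.toFun 0‖ ≤ κ₀) ∧
  ∀ g ∈ F, ∀ δ : ℝ, 0 < δ → δ ≤ ε →
    Cost a w g (E g) (L g) δ ≤
      ENNReal.ofReal (κ₁ * (max g.inDim g.outDim : ℝ) ^ κ₂ * Real.logb 2 δ⁻¹ ^ κ₃)

/-- A catalog network of depth `Dm + 1` with dimensions `l 0, …, l (2(Dm+1))`: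
layer `k + 1` consists of the affine map with matrix `V k` (size
`l (2k+1) × l (2k)`) and bias `b k`, followed by the componentwise application
of the catalog functions `f k 0, …, f k (n k - 1)`. -/
structure CatNN where
  Dm : ℕ
  l : ℕ → ℕ
  V : ℕ → ℕ → ℕ → ℝ
  b : ℕ → ℕ → ℝ
  n : ℕ → ℕ
  f : ℕ → ℕ → CatFun
  hn : ∀ k ≤ Dm, 0 < n k
  hin : ∀ k ≤ Dm, ∑ j ∈ Finset.range (n k), (f k j).inDim = l (2 * k + 1)
  hout : ∀ k ≤ Dm, ∑ j ∈ Finset.range (n k), (f k j).outDim = l (2 * k + 2)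

namespace CatNN

/-- Depth `D(ξ)` of a catalog network. -/
def depth (ξ : CatNN) : ℕ := ξ.Dm + 1

/-- Maximal width `W(ξ) = max (l 0, …, l (2D))`. -/
def width (ξ : CatNN) : ℕ := (Finset.range (2 * ξ.depth + 1)).sup ξ.l

/-- Input offset of the `j`-th catalog function in layer `k + 1`. -/
def offIn (ξ : CatNN) (k j : ℕ) : ℕ := ∑ i ∈ Finset.range j, (ξ.f k i).inDim

/-- Output offset of the `j`-th catalog function in layer `k + 1`. -/
def offOut (ξ : CatNN) (k j : ℕ) : ℕ := ∑ i ∈ Finset.range j, (ξ.f k i).outDim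

/-- The affine part `A_{k+1}(x) = V_{k+1} x + b_{k+1}` of layer `k + 1`. -/
def aff (ξ : CatNN) (k : ℕ) (x : ℕ → ℝ) : ℕ → ℝ :=
  fun i => (∑ j ∈ Finset.range (ξ.l (2 * k)), ξ.V k i j * x j) + ξ.b k i

/-- The nonlinear part `M_{k+1}` of layer `k + 1`: applies `f k 0` to the first
`in (f k 0)` coordinates, `f k 1` to the next `in (f k 1)` coordinates, etc. -/
def M (ξ : CatNN) (k : ℕ) (x : ℕ → ℝ) : ℕ → ℝ := fun i =>
  ∑ j ∈ Finset.range (ξ.n k),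
    if h : ξ.offOut k j ≤ i ∧ i < ξ.offOut k j + (ξ.f k j).outDim then
      (ξ.f k j).toFun (WithLp.toLp 2 fun (m : Fin (ξ.f k j).inDim) => x (ξ.offIn k j + (m : ℕ))) ⟨i - ξ.offOut k j, by omega⟩
    else 0

/-- Forward pass through the first `k` layers of a catalog network. -/
def fwd (ξ : CatNN) : ℕ → (ℕ → ℝ) → ℕ → ℝ
  | 0 => fun x => x
  | k + 1 => fun x => ξ.M k (ξ.aff k (ξ.fwd k x))

/-- The realization `R(ξ) : ℝ^{l 0} → ℝ^{l (2D)}` of a catalog network. -/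
def realize (ξ : CatNN) (x : EuclideanSpace ℝ (Fin (ξ.l 0))) :
    EuclideanSpace ℝ (Fin (ξ.l (2 * ξ.depth))) :=
  WithLp.toLp 2 fun (i : Fin (ξ.l (2 * ξ.depth))) => ξ.fwd ξ.depth (emb (ξ.l 0) x) i

/-- The nonlinear part `M_{k+1}` as a map `ℝ^{l (2k+1)} → ℝ^{l (2k+2)}`. -/
def layerMap (ξ : CatNN) (k : ℕ) (x : EuclideanSpace ℝ (Fin (ξ.l (2 * k + 1)))) :
    EuclideanSpace ℝ (Fin (ξ.l (2 * k + 2))) :=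
  WithLp.toLp 2 fun (i : Fin (ξ.l (2 * k + 2))) => ξ.M k (emb (ξ.l (2 * k + 1)) x) i

/-- Membership in the product set `E_{k+1}(ξ) = E_{f k 0} × ⋯ × E_{f k (n k - 1)}`. -/
def memE (ξ : CatNN) (E : (g : CatFun) → Set (EuclideanSpace ℝ (Fin g.inDim)))
    (k : ℕ) (x : ℕ → ℝ) : Prop :=
  ∀ j < ξ.n k, WithLp.toLp 2 (fun m : Fin (ξ.f k j).inDim => x (ξ.offIn k j + (m : ℕ))) ∈ E (ξ.f k j)

/-- The admissible domain `A(ξ)` on which the catalog network can be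
approximated. -/
def admissible (ξ : CatNN)
    (E : (g : CatFun) → Set (EuclideanSpace ℝ (Fin g.inDim))) :
    Set (EuclideanSpace ℝ (Fin (ξ.l 0))) :=
  {x | ∀ k ≤ ξ.Dm, ξ.memE E k (ξ.aff k (ξ.fwd k (emb (ξ.l 0) x)))}

/-- The Lipschitz constant `Lip_{k+1}(ξ) = max_j L (f k j)` of layer `k + 1`. -/
def LipLayer (ξ : CatNN) (L : CatFun → ℝ) (k : ℕ) : ℝ :=
  if h : (Finset.range (ξ.n k)).Nonempty then
    (Finset.range (ξ.n k)).sup' h fun j => L (ξ.f k j)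
  else 0

set_option synthInstance.maxHeartbeats 400000 in
/-- Operator norm `‖V_{k+1}‖` of the weight matrix of layer `k + 1`. -/
def Vnorm (ξ : CatNN) (k : ℕ) : ℝ :=
  ‖LinearMap.toContinuousLinearMap (Matrix.toEuclideanLin
    (Matrix.of fun (i : Fin (ξ.l (2 * k + 1))) (j : Fin (ξ.l (2 * k))) => ξ.V k i j))‖

/-- The worst-case Lipschitz constant `Lip(ξ) = ∏_k Lip_k(ξ) ‖V_k‖`. -/
def LipTotal (ξ : CatNN) (L : CatFun → ℝ) : ℝ :=
  ∏ k ∈ Finset.range ξ.depth, ξ.LipLayer L k * ξ.Vnorm k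

/-- Euclidean norm `‖b_{k+1}‖` of the bias of layer `k + 1`. -/
def bnorm (ξ : CatNN) (k : ℕ) : ℝ :=
  ‖(show EuclideanSpace ℝ (Fin (ξ.l (2 * k + 1))) from WithLp.toLp 2 fun (i : Fin (ξ.l (2 * k + 1))) => ξ.b k i)‖

/-- The translation size `B(ξ) = max {1, ‖b_1‖, …, ‖b_D‖}`. -/
def B (ξ : CatNN) : ℝ :=
  max 1 ((Finset.range ξ.depth).sup'
    ⟨0, Finset.mem_range.mpr (Nat.succ_pos ξ.Dm)⟩ ξ.bnorm)

/-- The quantity `Λ(ξ)` combining the Lipschitz constants of the affine and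
nonlinear parts of the layers (with the convention `Lip_0(ξ) = 0`). -/
def Lambda (ξ : CatNN) (L : CatFun → ℝ) : ℝ :=
  max 1 ((Finset.range ξ.depth).sup'
    ⟨0, Finset.mem_range.mpr (Nat.succ_pos ξ.Dm)⟩ fun K =>
      max 1 (max (if K = 0 then 0 else ξ.LipLayer L (K - 1)) (ξ.LipLayer L ξ.Dm)) *
        ξ.Vnorm ξ.Dm * ∏ j ∈ Finset.Ico K ξ.Dm, ξ.LipLayer L j * ξ.Vnorm j)

/-- The catalog network `ξ` is a catalog network over the catalog `F`. -/
def overCat (ξ : CatNN) (F : Set CatFun) : Prop :=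
  ∀ k ≤ ξ.Dm, ∀ j < ξ.n k, ξ.f k j ∈ F

end CatNN

/-- The product function `pr(x, y) = x y` as a catalog function. -/
def prodFun : CatFun where
  inDim := 2
  outDim := 1
  toFun := fun x => WithLp.toLp 2 fun _ => x 0 * x 1
  cont := by fun_prop

/-!
Since `x y = ((x + y)² - (x - y)²) / 4`, after rescaling by `m = 2 r` it suffices to approximate
`t ↦ t²` on `[0, 1]`, which Yarotsky's sawtooth construction does with exponential accuracy:
for the hat function `g` the functions `f_N t = t - ∑_{k=1}^N g^[k] t / 4^k` satisfy
`f_N t - t² = (g^[N] t - (g^[N] t)²) / 4^N ∈ [0, 4^{-(N+1)}]` on `[0, 1]` and are `2`-Lipschitz.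
A ReLU network of width `8` runs the recursion `(g^[k], f_k) ↦ (g^[k+1], f_{k+1})` for the two
inputs `|x ± y| / m` in parallel, one layer per step, so `N ≈ log₂ (r² / ε) / 2` steps and
`72 N + O(1)` parameters suffice.
-/

lemma ReLU_of_nonneg {x : ℝ} (h : 0 ≤ x) : ReLU x = x := posPart_of_nonneg h

lemma ReLU_of_nonpos {x : ℝ} (h : x ≤ 0) : ReLU x = 0 := posPart_of_nonpos h

lemma ReLU_add_ReLU_neg (x : ℝ) : ReLU x + ReLU (-x) = |x| := posPart_add_negPart x

section Sawtooth

open Finset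

/-- The hat function `g`, written as the combination of ReLUs that the network computes. -/
def hat (t : ℝ) : ℝ := 2 * ReLU t - 4 * ReLU (t - 1 / 2) + 2 * ReLU (t - 1)

lemma hat_eq (t : ℝ) : hat t = 2 * max (min t (1 - t)) 0 := by
  unfold hat
  rcases le_total t 0 with h₀ | h₀
  · rw [min_eq_left (by linarith), max_eq_right h₀, ReLU_of_nonpos h₀,
      ReLU_of_nonpos (by linarith), ReLU_of_nonpos (by linarith)]
    ring
  rcases le_total t (1 / 2) with h₁ | h₁
  · rw [min_eq_left (by linarith), max_eq_left h₀, ReLU_of_nonneg h₀,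
      ReLU_of_nonpos (by linarith), ReLU_of_nonpos (by linarith)]
    ring
  rcases le_total t 1 with h₂ | h₂
  · rw [min_eq_right (by linarith), max_eq_left (by linarith), ReLU_of_nonneg h₀,
      ReLU_of_nonneg (by linarith), ReLU_of_nonpos (by linarith)]
    ring
  · rw [min_eq_right (by linarith), max_eq_right (by linarith), ReLU_of_nonneg h₀,
      ReLU_of_nonneg (by linarith), ReLU_of_nonneg (by linarith)]
    ring

lemma hat_nonneg (t : ℝ) : 0 ≤ hat t := by
  rw [hat_eq]
  positivity

lemma hat_le_one (t : ℝ) : hat t ≤ 1 := by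
  have h : max (min t (1 - t)) 0 ≤ 1 / 2 :=
    max_le (by linarith [min_le_left t (1 - t), min_le_right t (1 - t)]) (by norm_num)
  rw [hat_eq]
  linarith

lemma hat_zero : hat 0 = 0 := by
  simp [hat_eq]

lemma hat_of_one_le {t : ℝ} (h : 1 ≤ t) : hat t = 0 := by
  rw [hat_eq, min_eq_right (by linarith), max_eq_right (by linarith), mul_zero]

lemma lipschitzWith_hat : LipschitzWith 2 hat := by
  refine LipschitzWith.of_dist_le_mul fun x y => ?_
  simp only [Real.dist_eq, hat_eq, ← mul_sub, abs_mul, abs_two, NNReal.coe_ofNat]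
  refine mul_le_mul_of_nonneg_left ?_ zero_le_two
  refine (abs_max_sub_max_le_abs _ _ (0 : ℝ)).trans <| (abs_min_sub_min_le_max _ _ _ _).trans ?_
  rw [max_le_iff, show 1 - x - (1 - y) = -(x - y) by ring, abs_neg]
  exact ⟨le_rfl, le_rfl⟩

lemma hat_sub_sq {u : ℝ} (h₀ : 0 ≤ u) (h₁ : u ≤ 1) :
    4 * (u - u ^ 2) - hat u = hat u - hat u ^ 2 := by
  rw [hat_eq]
  rcases le_total u (1 - u) with h | h
  · rw [min_eq_left h, max_eq_left h₀]; ring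
  · rw [min_eq_right h, max_eq_left (by linarith)]; ring

lemma hat_iterate_mem_Icc {t : ℝ} (h₀ : 0 ≤ t) (h₁ : t ≤ 1) (k : ℕ) :
    0 ≤ hat^[k] t ∧ hat^[k] t ≤ 1 := by
  cases k with
  | zero => exact ⟨h₀, h₁⟩
  | succ k =>
    rw [Function.iterate_succ_apply']
    exact ⟨hat_nonneg _, hat_le_one _⟩

lemma hat_iterate_succ_of_one_le {t : ℝ} (h : 1 ≤ t) (k : ℕ) : hat^[k + 1] t = 0 := by
  induction k with
  | zero => exact hat_of_one_le h
  | succ k ih =>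
    rw [Function.iterate_succ_apply', ih, hat_zero]

/-- The approximation `f_N` of `t ↦ t²` on `[0, 1]`. -/
def sqApprox (N : ℕ) (t : ℝ) : ℝ := t - ∑ k ∈ range N, hat^[k + 1] t / 4 ^ (k + 1)

lemma sqApprox_zero (t : ℝ) : sqApprox 0 t = t := by
  simp [sqApprox]

lemma sqApprox_succ (N : ℕ) (t : ℝ) :
    sqApprox (N + 1) t = sqApprox N t - hat (hat^[N] t) / 4 ^ (N + 1) := by
  rw [sqApprox, sqApprox, sum_range_succ, Function.iterate_succ_apply']
  ring

lemma sqApprox_eq {t : ℝ} (h₀ : 0 ≤ t) (h₁ : t ≤ 1) (N : ℕ) :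
    sqApprox N t = t ^ 2 + (hat^[N] t - (hat^[N] t) ^ 2) / 4 ^ N := by
  induction N with
  | zero =>
    rw [sqApprox_zero, Function.iterate_zero_apply]
    ring
  | succ N ih =>
    obtain ⟨hu₀, hu₁⟩ := hat_iterate_mem_Icc h₀ h₁ N
    rw [sqApprox_succ, ih, Function.iterate_succ_apply']
    linear_combination hat_sub_sq hu₀ hu₁ / 4 ^ (N + 1)

lemma sqApprox_sub_sq_mem_Icc {t : ℝ} (h₀ : 0 ≤ t) (h₁ : t ≤ 1) (N : ℕ) :
    0 ≤ sqApprox N t - t ^ 2 ∧ sqApprox N t - t ^ 2 ≤ 1 / 4 ^ (N + 1) := by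
  obtain ⟨hu₀, hu₁⟩ := hat_iterate_mem_Icc h₀ h₁ N
  have h4 : (1 : ℝ) / 4 ^ (N + 1) = (1 / 4) / 4 ^ N := by
    rw [pow_succ]; field_simp
  rw [sqApprox_eq h₀ h₁, add_sub_cancel_left, h4]
  constructor
  · exact div_nonneg (by nlinarith) (by positivity)
  · exact div_le_div_of_nonneg_right (by nlinarith [sq_nonneg (hat^[N] t - 1 / 2)]) (by positivity)

lemma sqApprox_of_one_le {t : ℝ} (h : 1 ≤ t) (N : ℕ) : sqApprox N t = t := by
  simp [sqApprox, hat_iterate_succ_of_one_le h]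

lemma sqApprox_nonneg {t : ℝ} (h : 0 ≤ t) (N : ℕ) : 0 ≤ sqApprox N t := by
  rcases le_total t 1 with h₁ | h₁
  · nlinarith [(sqApprox_sub_sq_mem_Icc h h₁ N).1]
  · rw [sqApprox_of_one_le h₁]
    exact h

/-- The `k`-th term of `sqApprox` is `2⁻ᵏ`-Lipschitz, and these constants sum to at most `1`. -/
lemma abs_sqApprox_sub_le (N : ℕ) (x y : ℝ) :
    |sqApprox N x - sqApprox N y| ≤ 2 * |x - y| := by
  have hterm (k : ℕ) : |hat^[k + 1] x / 4 ^ (k + 1) - hat^[k + 1] y / 4 ^ (k + 1)| ≤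
      (1 / 2) ^ (k + 1) * |x - y| := by
    have h := (lipschitzWith_hat.iterate (k + 1)).dist_le_mul x y
    simp only [Real.dist_eq, NNReal.coe_pow, NNReal.coe_ofNat] at h
    rw [← sub_div, abs_div, abs_of_pos (by positivity : (0 : ℝ) < 4 ^ (k + 1)),
      div_le_iff₀ (by positivity)]
    calc |hat^[k + 1] x - hat^[k + 1] y| ≤ 2 ^ (k + 1) * |x - y| := h
      _ = (1 / 2) ^ (k + 1) * |x - y| * 4 ^ (k + 1) := by
        rw [mul_right_comm, ← mul_pow]; norm_num
  have hsum : |∑ k ∈ range N, (hat^[k + 1] x / 4 ^ (k + 1) - hat^[k + 1] y / 4 ^ (k + 1))|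
      ≤ |x - y| := by
    have hgeom : ∑ k ∈ range N, (1 / 2 : ℝ) ^ (k + 1) ≤ 1 := by
      simp only [pow_succ, ← sum_mul]
      linarith [sum_geometric_two_le N]
    refine (abs_sum_le_sum_abs _ _).trans <| (sum_le_sum fun k _ => hterm k).trans ?_
    rw [← sum_mul]
    exact mul_le_of_le_one_left (abs_nonneg _) hgeom
  calc |sqApprox N x - sqApprox N y|
      = |(x - y) -
          ∑ k ∈ range N, (hat^[k + 1] x / 4 ^ (k + 1) - hat^[k + 1] y / 4 ^ (k + 1))| := by
        rw [sqApprox, sqApprox, sum_sub_distrib]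
        congr 1
        ring
    _ ≤ |x - y| + |x - y| := (abs_sub _ _).trans (add_le_add le_rfl hsum)
    _ = 2 * |x - y| := (two_mul _).symm

end Sawtooth

def prodApprox (N : ℕ) (m x y : ℝ) : ℝ :=
  m ^ 2 / 4 * (sqApprox N (|x + y| / m) - sqApprox N (|x - y| / m))

lemma sq_le_mul_sqApprox {m s : ℝ} (hm : 0 < m) (hs : |s| ≤ m) (N : ℕ) :
    0 ≤ m ^ 2 * sqApprox N (|s| / m) - s ^ 2 ∧
      m ^ 2 * sqApprox N (|s| / m) - s ^ 2 ≤ m ^ 2 / 4 ^ (N + 1) := by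
  have ht : |s| / m ≤ 1 := (div_le_one hm).2 hs
  obtain ⟨h₀, h₁⟩ := sqApprox_sub_sq_mem_Icc (by positivity) ht N
  have hsq : m ^ 2 * (|s| / m) ^ 2 = s ^ 2 := by
    rw [div_pow, sq_abs]; field_simp
  rw [← hsq, ← mul_sub]
  refine ⟨by positivity, ?_⟩
  calc m ^ 2 * (sqApprox N (|s| / m) - (|s| / m) ^ 2) ≤ m ^ 2 * (1 / 4 ^ (N + 1)) := by gcongr
    _ = m ^ 2 / 4 ^ (N + 1) := mul_one_div _ _

/-- Both squares are approximated from above, so their errors partly cancel. -/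
lemma abs_mul_sub_prodApprox_le {r x y : ℝ} (hr : 0 < r) (hx : |x| ≤ r) (hy : |y| ≤ r)
    (N : ℕ) : |x * y - prodApprox N (2 * r) x y| ≤ r ^ 2 / 4 ^ (N + 1) := by
  have hm : 0 < 2 * r := by linarith
  obtain ⟨hu₀, hu₁⟩ := sq_le_mul_sqApprox hm ((abs_add_le x y).trans (by linarith)) N
  obtain ⟨hv₀, hv₁⟩ := sq_le_mul_sqApprox hm ((abs_sub x y).trans (by linarith)) N
  have hdiff : x * y - prodApprox N (2 * r) x y =
      ((2 * r) ^ 2 * sqApprox N (|x - y| / (2 * r)) - (x - y) ^ 2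
        - ((2 * r) ^ 2 * sqApprox N (|x + y| / (2 * r)) - (x + y) ^ 2)) / 4 := by
    rw [prodApprox]; ring
  have hbound : (2 * r) ^ 2 / 4 ^ (N + 1) / 4 = r ^ 2 / 4 ^ (N + 1) := by ring
  rw [hdiff, abs_div, abs_of_pos (by norm_num : (0 : ℝ) < 4), ← hbound]
  gcongr
  exact abs_sub_le_of_nonneg_of_le hv₀ hv₁ hu₀ hu₁

lemma abs_prodApprox_sub_le {m : ℝ} (hm : 0 < m) (N : ℕ) (x y x' y' : ℝ) :
    |prodApprox N m x y - prodApprox N m x' y'| ≤ m * (|x - x'| + |y - y'|) := by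
  have hchannel (a b : ℝ) :
      |sqApprox N (|a| / m) - sqApprox N (|b| / m)| ≤ 2 * |a - b| / m := by
    refine (abs_sqApprox_sub_le _ _ _).trans ?_
    rw [← sub_div, abs_div, abs_of_pos hm, ← mul_div_assoc]
    exact div_le_div_of_nonneg_right (by linarith [abs_abs_sub_abs_le_abs_sub a b]) hm.le
  have hadd := abs_add_le (x - x') (y - y')
  have hsub := abs_sub (x - x') (y - y')
  have hu := hchannel (x + y) (x' + y')
  have hv := hchannel (x - y) (x' - y')
  rw [show x + y - (x' + y') = (x - x') + (y - y') by ring] at hu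
  rw [show x - y - (x' - y') = (x - x') - (y - y') by ring] at hv
  calc |prodApprox N m x y - prodApprox N m x' y'|
      = m ^ 2 / 4 * |(sqApprox N (|x + y| / m) - sqApprox N (|x' + y'| / m))
          - (sqApprox N (|x - y| / m) - sqApprox N (|x' - y'| / m))| := by
        rw [prodApprox, prodApprox, ← mul_sub, abs_mul, abs_of_pos (by positivity)]
        ring_nf
    _ ≤ m ^ 2 / 4 * (2 * (|x - x'| + |y - y'|) / m + 2 * (|x - x'| + |y - y'|) / m) := by
        gcongr
        refine (abs_sub _ _).trans (add_le_add (hu.trans ?_) (hv.trans ?_)) <;> gcongr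
    _ = m * (|x - x'| + |y - y'|) := by field_simp; ring

section ProductNetwork

open Finset

/-- The thresholds `θ = 0, 1/2, 1` of the three neurons `ReLU (u - θ)` of which `hat u` is a
linear combination. -/
def thresh (s : ℕ) : ℝ := if s = 1 then 1 / 2 else if s = 2 then 1 else 0

def hatW (j : ℕ) : ℝ := if j = 0 then 2 else if j = 1 then -4 else if j = 2 then 2 else 0

/-- Neuron `s < 4` of a channel with input `t ≥ 0` after `k` steps of the recursion: neurons
`0, 1, 2` encode `hat^[k] t`, neuron `3` carries `f_k t`. -/
def chanState (t : ℝ) (k s : ℕ) : ℝ :=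
  if s < 3 then ReLU (hat^[k] t - thresh s) else sqApprox k t

/-- The weights of one step of the recursion inside a channel, with `c = 4 ^ (k + 1)`. -/
def stepW (c : ℝ) (s j : ℕ) : ℝ := if s < 3 then hatW j else if j = 3 then 1 else -hatW j / c

lemma sum_hatW_mul_chanState (t : ℝ) (k : ℕ) :
    ∑ j ∈ range 4, hatW j * chanState t k j = hat (hat^[k] t) := by
  simp [sum_range_succ, hatW, chanState, thresh, hat]
  ring

lemma sum_stepW_mul_chanState_three (t : ℝ) (k : ℕ) :
    ∑ j ∈ range 4, stepW (4 ^ (k + 1)) 3 j * chanState t k j = sqApprox (k + 1) t := by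
  rw [sqApprox_succ, ← sum_hatW_mul_chanState]
  simp [sum_range_succ, stepW, hatW, chanState]
  ring

lemma ReLU_sum_stepW_mul_chanState {t : ℝ} (ht : 0 ≤ t) (k : ℕ) {s : ℕ} (hs : s < 4) :
    ReLU (∑ j ∈ range 4, stepW (4 ^ (k + 1)) s j * chanState t k j - thresh s) =
      chanState t (k + 1) s := by
  by_cases h3 : s < 3
  · simp only [stepW, if_pos h3]
    rw [sum_hatW_mul_chanState]
    simp only [chanState, if_pos h3, Function.iterate_succ_apply']
  · obtain rfl : s = 3 := by omega
    rw [sum_stepW_mul_chanState_three]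
    simp [chanState, thresh, ReLU_of_nonneg (sqApprox_nonneg ht _)]

/-- First layer: `(x, y) ↦ (x + y, -(x + y), x - y, -(x - y)) / m`. -/
def inW (m : ℝ) (i j : ℕ) : ℝ :=
  (if i % 2 = 0 then 1 else -1) * (if j = 1 ∧ 2 ≤ i then -1 else 1) / m

/-- Second layer: neuron `i` receives `ReLU a + ReLU (-a) = |a|` for the input `a` of its channel
`i / 4`. -/
def splitW (i j : ℕ) : ℝ := if j / 2 = i / 4 then 1 else 0

def midW (c : ℝ) (i j : ℕ) : ℝ := if j / 4 = i / 4 then stepW c (i % 4) (j % 4) else 0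

def outW (c m : ℝ) (j : ℕ) : ℝ := m ^ 2 / 4 * (if j < 4 then 1 else -1) * stepW c 3 (j % 4)

def chanBias (i : ℕ) : ℝ := -thresh (i % 4)

/-- The ReLU network of width `8` computing `prodApprox (M + 1) m`: neurons `0–3` of each hidden
layer form the channel of `|x + y| / m`, neurons `4–7` the channel of `|x - y| / m`. -/
def prodNet (M : ℕ) (m : ℝ) : NN where
  Dm := M + 2
  l k := if k = 0 then 2 else if k = 1 then 4 else if k = M + 3 then 1 else 8
  V k :=
    if k = 0 then inW m else if k = 1 then splitW
    else if k = M + 2 then fun _ => outW (4 ^ (M + 1)) m else midW (4 ^ (k - 1))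
  b k := if k = 0 ∨ k = M + 2 then 0 else chanBias

section Layers

variable (M : ℕ) (m : ℝ)

lemma prodNet_l_zero : (prodNet M m).l 0 = 2 := rfl

lemma prodNet_l_one : (prodNet M m).l 1 = 4 := rfl

lemma prodNet_l_of_two_le {k : ℕ} (h₂ : 2 ≤ k) (hk : k ≤ M + 2) :
    (prodNet M m).l k = 8 := by
  simp only [prodNet]
  rw [if_neg (by omega), if_neg (by omega), if_neg (by omega)]

lemma prodNet_l_last : (prodNet M m).l (M + 3) = 1 := by
  simp [prodNet]

lemma prodNet_V_zero : (prodNet M m).V 0 = inW m := rfl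

lemma prodNet_V_one : (prodNet M m).V 1 = splitW := by
  simp [prodNet]

lemma prodNet_V_of_two_le {k : ℕ} (h₂ : 2 ≤ k) (hk : k ≤ M + 1) :
    (prodNet M m).V k = midW (4 ^ (k - 1)) := by
  simp only [prodNet]
  rw [if_neg (by omega), if_neg (by omega), if_neg (by omega)]

lemma prodNet_V_last : (prodNet M m).V (M + 2) = fun _ => outW (4 ^ (M + 1)) m := by
  simp [prodNet]

lemma prodNet_b_zero : (prodNet M m).b 0 = 0 := rfl

lemma prodNet_b_of_pos {k : ℕ} (h₁ : 1 ≤ k) (hk : k ≤ M + 1) :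
    (prodNet M m).b k = chanBias := by
  simp only [prodNet]
  rw [if_neg (by omega)]

lemma prodNet_b_last : (prodNet M m).b (M + 2) = 0 := by
  simp [prodNet]

end Layers

def chanInput (m : ℝ) (x : ℕ → ℝ) (c : ℕ) : ℝ :=
  if c = 0 then |x 0 + x 1| / m else |x 0 - x 1| / m

lemma chanInput_nonneg {m : ℝ} (hm : 0 < m) (x : ℕ → ℝ) (c : ℕ) :
    0 ≤ chanInput m x c := by
  unfold chanInput
  split_ifs <;> positivity

lemma sum_midW_mul {u : ℕ → ℕ → ℝ} {h : ℕ → ℝ}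
    (hu : ∀ j < 8, h j = u (j / 4) (j % 4)) (c : ℝ) {i : ℕ} (hi : i < 8) :
    ∑ j ∈ range 8, midW c i j * h j = ∑ j ∈ range 4, stepW c (i % 4) j * u (i / 4) j := by
  rw [sum_congr rfl fun j hj => congrArg (midW c i j * ·) (hu j (mem_range.1 hj))]
  simp only [sum_range_succ, sum_range_zero]
  interval_cases i <;> simp [midW]

lemma sum_outW_mul {u : ℕ → ℕ → ℝ} {h : ℕ → ℝ}
    (hu : ∀ j < 8, h j = u (j / 4) (j % 4)) (c m : ℝ) :
    ∑ j ∈ range 8, outW c m j * h j =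
      m ^ 2 / 4 *
        (∑ j ∈ range 4, stepW c 3 j * u 0 j - ∑ j ∈ range 4, stepW c 3 j * u 1 j) := by
  rw [sum_congr rfl fun j hj => congrArg (outW c m j * ·) (hu j (mem_range.1 hj))]
  simp [sum_range_succ, outW]
  ring

lemma hidden_one_prodNet (M : ℕ) (m : ℝ) (x : ℕ → ℝ) :
    (prodNet M m).hidden ReLU 1 x 0 = ReLU ((x 0 + x 1) / m) ∧
    (prodNet M m).hidden ReLU 1 x 1 = ReLU (-((x 0 + x 1) / m)) ∧
    (prodNet M m).hidden ReLU 1 x 2 = ReLU ((x 0 - x 1) / m) ∧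
    (prodNet M m).hidden ReLU 1 x 3 = ReLU (-((x 0 - x 1) / m)) := by
  simp only [NN.hidden, NN.aff, prodNet_l_zero, prodNet_V_zero, prodNet_b_zero,
    sum_range_succ, sum_range_zero]
  refine ⟨?_, ?_, ?_, ?_⟩ <;> · simp [inW]; ring_nf

lemma hidden_two_prodNet (M : ℕ) {m : ℝ} (hm : 0 < m) (x : ℕ → ℝ) {i : ℕ} (hi : i < 8) :
    (prodNet M m).hidden ReLU 2 x i = chanState (chanInput m x (i / 4)) 0 (i % 4) := by
  obtain ⟨h0, h1, h2, h3⟩ := hidden_one_prodNet M m x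
  have hpair (a : ℝ) : ReLU (a / m) + ReLU (-(a / m)) = |a| / m := by
    rw [ReLU_add_ReLU_neg, abs_div, abs_of_pos hm]
  have habs (a : ℝ) : ReLU (|a| / m) = |a| / m := ReLU_of_nonneg (by positivity)
  show ReLU ((prodNet M m).aff 1 ((prodNet M m).hidden ReLU 1 x) i) = _
  simp only [NN.aff, prodNet_l_one, prodNet_V_one, prodNet_b_of_pos M m le_rfl (by omega),
    sum_range_succ, sum_range_zero, h0, h1, h2, h3]
  interval_cases i <;>
    simp [splitW, chanBias, chanState, chanInput, thresh, sqApprox_zero, hpair, habs,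
      sub_eq_add_neg]

lemma hidden_add_two_prodNet (M : ℕ) {m : ℝ} (hm : 0 < m) (x : ℕ → ℝ) {k : ℕ}
    (hk : k ≤ M) {i : ℕ} (hi : i < 8) :
    (prodNet M m).hidden ReLU (k + 2) x i = chanState (chanInput m x (i / 4)) k (i % 4) := by
  induction k generalizing i with
  | zero => exact hidden_two_prodNet M hm x hi
  | succ k ih =>
    show ReLU ((prodNet M m).aff (k + 2) ((prodNet M m).hidden ReLU (k + 2) x) i) = _
    rw [← ReLU_sum_stepW_mul_chanState (chanInput_nonneg hm x _) k (Nat.mod_lt _ four_pos),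
      NN.aff, prodNet_l_of_two_le M m le_add_self (by omega),
      prodNet_V_of_two_le M m le_add_self (by omega), prodNet_b_of_pos M m (by omega) (by omega),
      sum_midW_mul (u := fun c s => chanState (chanInput m x c) k s) (fun j hj => ih (by omega) hj)
        _ hi, show k + 2 - 1 = k + 1 by omega, chanBias, sub_eq_add_neg]

lemma fullReal_prodNet (M : ℕ) {m : ℝ} (hm : 0 < m) (x : ℕ → ℝ) :
    (prodNet M m).fullReal ReLU x 0 = prodApprox (M + 1) m (x 0) (x 1) := by
  have hstate (j : ℕ) (hj : j < 8) := hidden_add_two_prodNet M hm (trunc 2 x) le_rfl hj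
  show (prodNet M m).aff (M + 2) ((prodNet M m).hidden ReLU (M + 2) (trunc 2 x)) 0 = _
  rw [NN.aff, prodNet_l_of_two_le M m (by omega) le_rfl, prodNet_b_last, prodNet_V_last]
  simp only [Pi.zero_apply, add_zero]
  rw [sum_outW_mul (u := fun c s => chanState (chanInput m (trunc 2 x) c) M s) hstate,
    sum_stepW_mul_chanState_three, sum_stepW_mul_chanState_three]
  simp [prodApprox, chanInput, trunc]

lemma realAs_prodNet_apply (M : ℕ) {m : ℝ} (hm : 0 < m) (x : EuclideanSpace ℝ (Fin 2))
    (i : Fin 1) : (prodNet M m).realAs ReLU 2 1 x i = prodApprox (M + 1) m (x 0) (x 1) := by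
  rw [Fin.fin_one_eq_zero i]
  exact (fullReal_prodNet M hm _).trans (by simp [emb])

lemma prodNet_P (M : ℕ) (m : ℝ) : (prodNet M m).P = 72 * M + 61 := by
  have hmid : ∀ k ∈ range M,
      (prodNet M m).l (k + 1 + 1 + 1) * ((prodNet M m).l (k + 1 + 1) + 1) = 72 := by
    intro k hk
    rw [mem_range] at hk
    rw [prodNet_l_of_two_le M m (by omega) (by omega),
      prodNet_l_of_two_le M m (by omega) (by omega)]
  rw [NN.P, show (prodNet M m).depth = M + 2 + 1 from rfl, sum_range_succ, sum_range_succ',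
    sum_range_succ', sum_const_nat hmid, card_range, prodNet_l_last,
    prodNet_l_of_two_le M m (by omega) le_rfl, prodNet_l_of_two_le M m le_rfl (by omega),
    prodNet_l_one, prodNet_l_zero]
  ring

end ProductNetwork

lemma EuclideanSpace.norm_fin_one (v : EuclideanSpace ℝ (Fin 1)) : ‖v‖ = |v 0| := by
  rw [EuclideanSpace.norm_eq, Fin.sum_univ_one, Real.norm_eq_abs, sq_abs, Real.sqrt_sq_eq_abs]

lemma EuclideanSpace.abs_add_abs_le_sqrt_two_mul_norm (w : EuclideanSpace ℝ (Fin 2)) :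
    |w 0| + |w 1| ≤ √2 * ‖w‖ := by
  rw [EuclideanSpace.norm_eq, Fin.sum_univ_two, ← Real.sqrt_mul zero_le_two]
  refine (le_abs_self _).trans (Real.abs_le_sqrt ?_)
  simp only [Real.norm_eq_abs, sq_abs]
  nlinarith [sq_nonneg (|w 0| - |w 1|), sq_abs (w 0), sq_abs (w 1)]

lemma norm_realAs_prodNet_sub_le (M : ℕ) {r : ℝ} (hr : 0 < r)
    (x y : EuclideanSpace ℝ (Fin 2)) :
    ‖(prodNet M (2 * r)).realAs ReLU 2 1 x - (prodNet M (2 * r)).realAs ReLU 2 1 y‖ ≤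
      √8 * r * ‖x - y‖ := by
  have hm : 0 < 2 * r := by positivity
  have h8 : √8 = 2 * √2 := by
    rw [show (8 : ℝ) = 2 ^ 2 * 2 by norm_num, Real.sqrt_mul (by positivity),
      Real.sqrt_sq zero_le_two]
  rw [EuclideanSpace.norm_fin_one, PiLp.sub_apply, realAs_prodNet_apply M hm,
    realAs_prodNet_apply M hm]
  calc _ ≤ 2 * r * (|x 0 - y 0| + |x 1 - y 1|) := abs_prodApprox_sub_le hm _ _ _ _ _
    _ ≤ 2 * r * (√2 * ‖x - y‖) := by
      gcongr
      exact EuclideanSpace.abs_add_abs_le_sqrt_two_mul_norm (x - y)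
    _ = √8 * r * ‖x - y‖ := by rw [h8]; ring

lemma norm_toLp_mul_sub_realAs_prodNet_le (M : ℕ) {r : ℝ} (hr : 0 < r)
    {x : EuclideanSpace ℝ (Fin 2)} (hx₀ : |x 0| ≤ r) (hx₁ : |x 1| ≤ r) :
    ‖(WithLp.toLp 2 fun _ => x 0 * x 1 : EuclideanSpace ℝ (Fin 1)) -
        (prodNet M (2 * r)).realAs ReLU 2 1 x‖ ≤ r ^ 2 / 4 ^ (M + 2) := by
  rw [EuclideanSpace.norm_fin_one, PiLp.sub_apply, realAs_prodNet_apply M (by positivity)]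
  exact abs_mul_sub_prodApprox_le hr hx₀ hx₁ (M + 1)

lemma sq_div_four_pow_le {r ε : ℝ} (hr : 0 < r) (hε : 0 < ε) {N : ℕ}
    (hN : Real.logb 2 r + Real.logb 2 ε⁻¹ / 2 - 1 / 2 ≤ N) : r ^ 2 / 4 ^ (N + 2) ≤ ε := by
  have hlog : Real.logb 2 (r ^ 2 * ε⁻¹) ≤ ((2 * N + 4 : ℕ) : ℝ) := by
    rw [Real.logb_mul (by positivity) (by positivity), Real.logb_pow]
    push_cast
    linarith
  rw [Real.logb_le_iff_le_rpow one_lt_two (by positivity), Real.rpow_natCast,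
    show 2 * N + 4 = 2 * (N + 2) by ring, pow_mul] at hlog
  rw [div_le_iff₀ (by positivity)]
  calc r ^ 2 = r ^ 2 * ε⁻¹ * ε := by field_simp
    _ ≤ (2 ^ 2) ^ (N + 2) * ε := by gcongr
    _ = ε * 4 ^ (N + 2) := by norm_num; ring

lemma seventy_two_mul_ceil_add_le (c : ℝ) :
    72 * (⌈c⌉₊ : ℝ) + 61 ≤ max 208 (320 * c + 208) := by
  rcases le_or_gt c 0 with hc | hc
  · rw [Nat.ceil_eq_zero.mpr hc]
    norm_num
  · have := Nat.ceil_lt_add_one hc.le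
    exact le_max_of_le_right (by linarith)

theorem product_function_approximation_cost_general (r ε : ℝ) (hr : 0 < r)
    (hε0 : 0 < ε) :
    Cost ReLU (fun _ => 1) prodFun
        {x : EuclideanSpace ℝ (Fin 2) | |x 0| ≤ r ∧ |x 1| ≤ r}
        (Real.sqrt 8 * r) ε ≤
      ENNReal.ofReal (max 208 (320 * Real.logb 2 r + 160 * Real.logb 2 ε⁻¹ + 48)) := by
  set c := Real.logb 2 r + Real.logb 2 ε⁻¹ / 2 - 1 / 2 with hc
  have hcost : (((prodNet ⌈c⌉₊ (2 * r)).P : ℕ) : ℝ) ≤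
      max 208 (320 * Real.logb 2 r + 160 * Real.logb 2 ε⁻¹ + 48) := by
    convert seventy_two_mul_ceil_add_le c using 2
    · rw [prodNet_P]; push_cast; ring
    · rw [hc]; ring
  have herr (x : EuclideanSpace ℝ (Fin 2)) (hx : |x 0| ≤ r ∧ |x 1| ≤ r) :=
    (norm_toLp_mul_sub_realAs_prodNet_le ⌈c⌉₊ hr hx.1 hx.2).trans
      (sq_div_four_pow_le hr hε0 (Nat.le_ceil c))
  refine (iInf₂_le (prodNet ⌈c⌉₊ (2 * r)) ⟨rfl, prodNet_l_last _ _,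
    norm_realAs_prodNet_sub_le _ hr, fun x hx => (one_mul _).trans_le (herr x hx)⟩).trans ?_
  rw [← ENNReal.ofReal_natCast]
  exact ENNReal.ofReal_le_ofReal hcost

/-- Proposition 4.4: approximation cost of the product function on `[-r, r]²`
with ReLU networks and constant weight function `1`. -/
theorem product_function_approximation_cost (r ε : ℝ) (hr : 0 < r)
    (hε0 : 0 < ε) (hε1 : ε ≤ 1 / 2) :
    Cost ReLU (fun _ => 1) prodFun
        {x : EuclideanSpace ℝ (Fin 2) | |x 0| ≤ r ∧ |x 1| ≤ r}
        (Real.sqrt 8 * r) ε ≤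
      ENNReal.ofReal (max 208 (320 * Real.logb 2 r + 160 * Real.logb 2 ε⁻¹ + 48)) :=
  product_function_approximation_cost_general r ε hr hε0

end
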